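/- arXiv:0906.1568 — 2 statements merged into one kernel-verified Lean document; each statement's English description precedes it below -/
import Mathlib

section
/- Solutions h on (0,∞) of the modified Bessel-type ODE ((t∂ₜ)² - t² - ν²)h = 0 with ν > 0 that lie in t^{-1/2}L²((0,∞), t^{f₀}dt) after multiplication by t^{-(f₀+2a+1)/2}, where 2a + 2ν ≥ 1 and a > 0, must be identically zero; more precisely, every solution is a linear combination of the modified Bessel functions I_ν and K_ν, I_ν grows exponentially at infinity, and t^{-(f₀+2a+1)/2}K_ν fails to be square-integrable near 0 against t^{f₀}dt. -/
/-!
Write `φ = t h'`, so that `h' = φ / t` and `φ' = (t + ν² / t) h`. Then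
`(h φ)' = φ² / t + (t + ν² / t) h² ≥ 0`, so `h φ` is nondecreasing. Suppose `h (t₀) > 0`.

If `φ (t₀) ≥ 0`, the pair `u = h²`, `v = 2 h φ = t u'` satisfies `v' ≥ t u` on `[t₀, ∞)`;
integrating twice turns `u ≥ C t^k` into `u ≥ C' t^(k+2)`, so `h²` outgrows every power of `t` and
`h² t^(-2a)` is not integrable at `∞`.

If `φ (t₀) ≤ 0`, then `h φ ≤ 0` on `(0, t₀]`, so `h²` is nonincreasing there and `h` stays positive.
Then `W = t^ν (φ - ν h)` has `W' = t^(ν+1) h > 0`, so `W ≤ W (t₀) ≤ -ν h(t₀) t₀^ν`, and integrating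
`(t^(-ν) h)' = t^(-2ν-1) W` gives `h ≥ c t^(-ν)` near `0`. As `2a + 2ν ≥ 1`, `t^(-2ν-2a)`, hence
`h² t^(-2a)`, is not integrable at `0`.

Applying this to `h` and `-h` shows `h = 0`.
-/

open Set MeasureTheory Real

theorem monotoneOn_of_hasDerivAt_nonneg {D : Set ℝ} (hD : Convex ℝ D) {f f' : ℝ → ℝ}
    (hf : ∀ x ∈ D, HasDerivAt f (f' x) x) (hf'₀ : ∀ x ∈ D, 0 ≤ f' x) : MonotoneOn f D :=
  monotoneOn_of_hasDerivWithinAt_nonneg hD (fun x hx => (hf x hx).continuousAt.continuousWithinAt)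
    (fun x hx => (hf x (interior_subset hx)).hasDerivWithinAt)
    fun x hx => hf'₀ x (interior_subset hx)

theorem antitoneOn_of_hasDerivAt_nonpos {D : Set ℝ} (hD : Convex ℝ D) {f f' : ℝ → ℝ}
    (hf : ∀ x ∈ D, HasDerivAt f (f' x) x) (hf'₀ : ∀ x ∈ D, f' x ≤ 0) : AntitoneOn f D :=
  antitoneOn_of_hasDerivWithinAt_nonpos hD (fun x hx => (hf x hx).continuousAt.continuousWithinAt)
    (fun x hx => (hf x (interior_subset hx)).hasDerivWithinAt)
    fun x hx => hf'₀ x (interior_subset hx)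

theorem hasDerivAt_rpow_const_of_pos {t : ℝ} (ht : 0 < t) (p : ℝ) :
    HasDerivAt (fun s => s ^ p) (p * t ^ p / t) t := by
  convert hasDerivAt_rpow_const (p := p) (Or.inl ht.ne') using 1
  rw [rpow_sub_one ht.ne', mul_div_assoc]

theorem integrableOn_rpow_of_mul_rpow_le {g : ℝ → ℝ} {s : Set ℝ} {c p : ℝ} (hs : MeasurableSet s)
    (hs₀ : s ⊆ Ioi 0) (hc : 0 < c) (hg : IntegrableOn g s) (hle : ∀ t ∈ s, c * t ^ p ≤ g t) :
    IntegrableOn (fun t => t ^ p) s := by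
  refine (hg.const_mul c⁻¹).mono' ?_ ?_
  · exact ContinuousOn.aestronglyMeasurable
      (continuousOn_id.rpow_const fun t ht => Or.inl (hs₀ ht).ne') hs
  · filter_upwards [ae_restrict_mem hs] with t ht
    rw [norm_of_nonneg (rpow_nonneg (le_of_lt (hs₀ ht)) p), le_inv_mul_iff₀ hc]
    exact hle t ht

theorem mul_pow_succ_le_of_hasDerivAt {F F' : ℝ → ℝ} {T C : ℝ} {n : ℕ} (hT : 0 < T) (hC : 0 ≤ C)
    (hF : ∀ t ∈ Ici T, HasDerivAt F (F' t) t) (hF' : ∀ t ∈ Ici T, C * t ^ n ≤ F' t)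
    (hFT : 0 ≤ F T) : ∀ t ∈ Ici (2 * T), C / (2 * (n + 1)) * t ^ (n + 1) ≤ F t := by
  intro t ht
  have hTt : T ≤ t := by linarith [mem_Ici.1 ht]
  have hmono : MonotoneOn (fun s => F s - C / (n + 1) * s ^ (n + 1)) (Ici T) := by
    refine monotoneOn_of_hasDerivAt_nonneg (convex_Ici T) (f' := fun s => F' s - C * s ^ n)
      (fun s hs => ?_) fun s hs => sub_nonneg.2 (hF' s hs)
    refine ((hF s hs).fun_sub
      ((hasDerivAt_pow (n + 1) s).const_mul (C / (n + 1)))).congr_deriv ?_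
    rw [Nat.add_sub_cancel]
    push_cast
    field_simp
  have hpow : 2 * T ^ (n + 1) ≤ t ^ (n + 1) := calc
    2 * T ^ (n + 1) ≤ 2 ^ (n + 1) * T ^ (n + 1) := by
      gcongr; exact le_self_pow₀ (by norm_num) (by omega)
    _ = (2 * T) ^ (n + 1) := (mul_pow _ _ _).symm
    _ ≤ t ^ (n + 1) := by gcongr; exact ht
  have hG := hmono self_mem_Ici (mem_Ici.2 hTt) hTt
  have hCT : C / (n + 1) * T ^ (n + 1) ≤ C / (n + 1) * (t ^ (n + 1) / 2) := by gcongr; linarith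
  have hsplit : C / (2 * (n + 1)) * t ^ (n + 1) =
      C / (n + 1) * t ^ (n + 1) - C / (n + 1) * (t ^ (n + 1) / 2) := by
    field_simp; ring
  simp only at hG
  linarith

theorem exists_mul_pow_le_of_hasDerivAt {u v v' : ℝ → ℝ} {T : ℝ} (hT : 0 < T)
    (hu : ∀ t ∈ Ici T, HasDerivAt u (v t / t) t) (hv : ∀ t ∈ Ici T, HasDerivAt v (v' t) t)
    (hv' : ∀ t ∈ Ici T, t * u t ≤ v' t) (hu₀ : ∀ t ∈ Ici T, 0 ≤ u t)
    (huT : 0 < u T) (hvT : 0 ≤ v T) (k : ℕ) :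
    ∃ C > 0, ∃ T' ≥ T, ∀ t ∈ Ici T', C * t ^ (2 * k) ≤ u t := by
  have hv_nonneg : ∀ t ∈ Ici T, 0 ≤ v t := fun t ht =>
    hvT.trans <| monotoneOn_of_hasDerivAt_nonneg (convex_Ici T) hv
      (fun s hs => (mul_nonneg (hT.trans_le hs).le (hu₀ s hs)).trans (hv' s hs))
      self_mem_Ici ht ht
  induction k with
  | zero =>
    refine ⟨u T, huT, T, le_rfl, fun t ht => ?_⟩
    simpa using monotoneOn_of_hasDerivAt_nonneg (convex_Ici T) hu
      (fun s hs => div_nonneg (hv_nonneg s hs) (hT.trans_le hs).le) self_mem_Ici ht ht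
  | succ k ih =>
    obtain ⟨C, hC, T', hT', hCu⟩ := ih
    have hT'₀ : 0 < T' := hT.trans_le hT'
    have hsub : Ici T' ⊆ Ici T := Ici_subset_Ici.2 hT'
    have hv_ge := mul_pow_succ_le_of_hasDerivAt (n := 2 * k + 1) hT'₀ hC.le
      (fun t ht => hv t (hsub ht)) (fun t ht => calc
        C * t ^ (2 * k + 1) = t * (C * t ^ (2 * k)) := by ring
        _ ≤ t * u t := mul_le_mul_of_nonneg_left (hCu t ht) (hT'₀.trans_le ht).le
        _ ≤ v' t := hv' t (hsub ht)) (hv_nonneg T' hT')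
    have hsub₂ : Ici (2 * T') ⊆ Ici T := Ici_subset_Ici.2 (by linarith)
    have hu_ge := mul_pow_succ_le_of_hasDerivAt (n := 2 * k + 1)
      (C := C / (2 * ((2 * k + 1 : ℕ) + 1))) (by linarith) (by positivity)
      (fun t ht => hu t (hsub₂ ht)) (fun t ht => by
        have ht₀ : 0 < t := by linarith [mem_Ici.1 ht]
        rw [le_div_iff₀ ht₀, mul_assoc, ← pow_succ]
        exact hv_ge t ht) (hu₀ _ (hsub₂ self_mem_Ici))
    rw [show 2 * (k + 1) = 2 * k + 1 + 1 by ring]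
    exact ⟨_, by positivity, 2 * (2 * T'), by linarith, hu_ge⟩

theorem mul_sq_le_two_mul_add {t x y ν : ℝ} (ht : 0 < t) :
    t * x ^ 2 ≤ 2 * (y ^ 2 / t + (t + ν ^ 2 / t) * x ^ 2) := by
  have h₁ : 0 ≤ y ^ 2 / t := by positivity
  have h₂ : 0 ≤ ν ^ 2 / t * x ^ 2 := by positivity
  have h₃ : 0 ≤ t * x ^ 2 := by positivity
  rw [add_mul]
  linarith

/-- `φ` stands for `t h'`: this is `(t ∂ₜ)² h = (t² + ν²) h` as a first-order system on `(0, ∞)`. -/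
structure IsBesselSystem (ν : ℝ) (h φ : ℝ → ℝ) : Prop where
  hasDerivAt_fst : ∀ t ∈ Ioi (0 : ℝ), HasDerivAt h (φ t / t) t
  hasDerivAt_snd : ∀ t ∈ Ioi (0 : ℝ), HasDerivAt φ ((t + ν ^ 2 / t) * h t) t

theorem IsBesselSystem.of_ode {ν : ℝ} {h : ℝ → ℝ} (hreg : ContDiffOn ℝ 2 h (Ioi 0))
    (hode : ∀ t ∈ Ioi (0 : ℝ), t * deriv (fun s => s * deriv h s) t = (t ^ 2 + ν ^ 2) * h t) :
    IsBesselSystem ν h (fun t => t * deriv h t) where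
  hasDerivAt_fst t ht := by
    rw [mul_div_cancel_left₀ _ (ne_of_gt ht)]
    exact ((hreg.differentiableOn (by norm_num)).differentiableAt
      (isOpen_Ioi.mem_nhds ht)).hasDerivAt
  hasDerivAt_snd t ht := by
    have hh' : DifferentiableAt ℝ (deriv h) t :=
      ((hreg.deriv_of_isOpen isOpen_Ioi (m := 1) (by norm_num)).differentiableOn
        one_ne_zero).differentiableAt (isOpen_Ioi.mem_nhds ht)
    have hφ := (hasDerivAt_id' t).fun_mul hh'.hasDerivAt
    refine hφ.congr_deriv ?_
    have hode' := hode t ht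
    rw [hφ.deriv] at hode'
    have ht : t ≠ 0 := ne_of_gt ht
    field_simp
    linear_combination hode'

namespace IsBesselSystem

variable {ν : ℝ} {h φ : ℝ → ℝ}

theorem neg (hs : IsBesselSystem ν h φ) : IsBesselSystem ν (fun t => -h t) (fun t => -φ t) where
  hasDerivAt_fst t ht := by simpa [neg_div] using (hs.hasDerivAt_fst t ht).fun_neg
  hasDerivAt_snd t ht := by simpa using (hs.hasDerivAt_snd t ht).fun_neg

theorem continuousOn (hs : IsBesselSystem ν h φ) : ContinuousOn h (Ioi 0) :=
  fun t ht => (hs.hasDerivAt_fst t ht).continuousAt.continuousWithinAt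

theorem hasDerivAt_sq (hs : IsBesselSystem ν h φ) {t : ℝ} (ht : t ∈ Ioi 0) :
    HasDerivAt (fun s => h s ^ 2) (2 * h t * φ t / t) t := by
  refine ((hs.hasDerivAt_fst t ht).pow 2).congr_deriv ?_
  push_cast
  ring

theorem hasDerivAt_two_mul_mul (hs : IsBesselSystem ν h φ) {t : ℝ} (ht : t ∈ Ioi 0) :
    HasDerivAt (fun s => 2 * h s * φ s)
      (2 * (φ t ^ 2 / t + (t + ν ^ 2 / t) * h t ^ 2)) t := by
  refine (((hs.hasDerivAt_fst t ht).const_mul 2).mul (hs.hasDerivAt_snd t ht)).congr_deriv ?_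
  ring

theorem monotoneOn_two_mul_mul (hs : IsBesselSystem ν h φ) :
    MonotoneOn (fun t => 2 * h t * φ t) (Ioi 0) :=
  monotoneOn_of_hasDerivAt_nonneg (convex_Ioi 0) (fun _ ht => hs.hasDerivAt_two_mul_mul ht)
    fun _ ht => (mul_nonneg (le_of_lt ht) (sq_nonneg _)).trans (mul_sq_le_two_mul_add ht)

theorem pos_of_snd_nonpos {t₀ : ℝ} (hs : IsBesselSystem ν h φ) (ht₀ : 0 < t₀) (hpos : 0 < h t₀)
    (hφ : φ t₀ ≤ 0) : ∀ t ∈ Ioc 0 t₀, 0 < h t := by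
  have hsq : AntitoneOn (fun t => h t ^ 2) (Ioc 0 t₀) :=
    antitoneOn_of_hasDerivAt_nonpos (convex_Ioc 0 t₀) (fun t ht => hs.hasDerivAt_sq ht.1)
      fun t ht => div_nonpos_of_nonpos_of_nonneg
        ((hs.monotoneOn_two_mul_mul ht.1 ht₀ ht.2).trans
          (mul_nonpos_of_nonneg_of_nonpos (by positivity) hφ)) ht.1.le
  intro t ht
  by_contra! hneg
  obtain ⟨s, hs', hzero⟩ : ∃ s ∈ Icc t t₀, h s = 0 :=
    intermediate_value_Icc ht.2 (hs.continuousOn.mono fun x hx => ht.1.trans_le hx.1)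
      ⟨hneg, hpos.le⟩
  have := hsq ⟨ht.1.trans_le hs'.1, hs'.2⟩ (right_mem_Ioc.2 ht₀) hs'.2
  simp only [hzero] at this
  nlinarith

theorem div_rpow_le_of_snd_nonpos {t₀ : ℝ} (hs : IsBesselSystem ν h φ) (ht₀ : 0 < t₀)
    (hpos : 0 < h t₀) (hφ : φ t₀ ≤ 0) :
    ∀ t ∈ Ioc 0 t₀, h t₀ * t₀ ^ ν / 2 / t ^ ν ≤ h t := by
  have hh := hs.pos_of_snd_nonpos ht₀ hpos hφ
  set c := h t₀ * t₀ ^ ν / 2 with hc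
  set W : ℝ → ℝ := fun t => t ^ ν * (φ t - ν * h t)
  have hW : MonotoneOn W (Ioc 0 t₀) := by
    refine monotoneOn_of_hasDerivAt_nonneg (convex_Ioc 0 t₀) (f' := fun t => t ^ ν * t * h t)
      (fun t ht => ?_) fun t ht => (mul_pos (mul_pos (rpow_pos_of_pos ht.1 ν) ht.1) (hh t ht)).le
    have ht : 0 < t := ht.1
    refine ((hasDerivAt_rpow_const_of_pos ht ν).mul ((hs.hasDerivAt_snd t ht).fun_sub
      ((hs.hasDerivAt_fst t ht).const_mul ν))).congr_deriv ?_
    field_simp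
    ring
  have hWt₀ : W t₀ + 2 * ν * c = t₀ ^ ν * φ t₀ := by simp only [W, hc]; ring
  have hW₀ : ∀ t ∈ Ioc 0 t₀, W t + 2 * ν * c ≤ 0 := fun t ht => by
    linarith [hW ht (right_mem_Ioc.2 ht₀) ht.2,
      mul_nonpos_of_nonneg_of_nonpos (rpow_nonneg ht₀.le ν) hφ]
  have hρ : AntitoneOn (fun t => (h t - c / t ^ ν) / t ^ ν) (Ioc 0 t₀) := by
    refine antitoneOn_of_hasDerivAt_nonpos (convex_Ioc 0 t₀)
      (f' := fun t => (W t + 2 * ν * c) / (t ^ ν) ^ 2 / t) (fun t ht => ?_)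
      fun t ht => div_nonpos_of_nonpos_of_nonneg
        (div_nonpos_of_nonpos_of_nonneg (hW₀ t ht) (sq_nonneg _)) ht.1.le
    have ht : 0 < t := ht.1
    have hpow := hasDerivAt_rpow_const_of_pos ht ν
    have htν : t ^ ν ≠ 0 := (rpow_pos_of_pos ht ν).ne'
    refine (((hs.hasDerivAt_fst t ht).fun_sub ((hasDerivAt_const t c).fun_div hpow htν)).fun_div
      hpow htν).congr_deriv ?_
    simp only [W]
    field_simp
    ring
  have ht₀ν : 0 < t₀ ^ ν := rpow_pos_of_pos ht₀ ν
  have hρt₀ : 0 ≤ (h t₀ - c / t₀ ^ ν) / t₀ ^ ν := by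
    have : c / t₀ ^ ν = h t₀ / 2 := by rw [hc]; field_simp
    exact div_nonneg (by linarith) ht₀ν.le
  intro t ht
  have := (le_div_iff₀ (rpow_pos_of_pos ht.1 ν)).1 (hρt₀.trans (hρ ht (right_mem_Ioc.2 ht₀) ht.2))
  linarith

theorem not_integrableOn_of_mul_nonneg (hs : IsBesselSystem ν h φ) (a : ℝ) {t₀ : ℝ}
    (ht₀ : 0 < t₀) (hh : h t₀ ≠ 0) (hhφ : 0 ≤ h t₀ * φ t₀) :
    ¬ IntegrableOn (fun t => h t ^ 2 * t ^ (-(2 * a))) (Ioi 0) := by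
  intro hL2
  obtain ⟨k, hk⟩ := exists_nat_gt a
  obtain ⟨C, hC, T, hT, hCu⟩ := exists_mul_pow_le_of_hasDerivAt (u := fun t => h t ^ 2)
    (v := fun t => 2 * h t * φ t) ht₀ (fun t ht => hs.hasDerivAt_sq (ht₀.trans_le ht))
    (fun t ht => hs.hasDerivAt_two_mul_mul (ht₀.trans_le ht))
    (fun t ht => mul_sq_le_two_mul_add (ht₀.trans_le ht)) (fun _ _ => sq_nonneg _)
    (by positivity) (by linarith) k
  have hT₀ : 0 < T := ht₀.trans_le hT
  have hint := integrableOn_rpow_of_mul_rpow_le (p := (2 * k : ℕ) + -(2 * a)) measurableSet_Ioi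
    (Ioi_subset_Ioi hT₀.le) hC (hL2.mono_set (Ioi_subset_Ioi hT₀.le)) fun t ht => by
      have ht₀ : 0 < t := hT₀.trans ht
      rw [rpow_add ht₀, rpow_natCast, ← mul_assoc]
      exact mul_le_mul_of_nonneg_right (hCu t (Ioi_subset_Ici_self ht)) (rpow_nonneg ht₀.le _)
  rw [integrableOn_Ioi_rpow_iff hT₀] at hint
  push_cast at hint
  linarith

theorem not_integrableOn_of_snd_nonpos (hs : IsBesselSystem ν h φ) {a : ℝ}
    (haν : 1 ≤ 2 * a + 2 * ν) {t₀ : ℝ} (ht₀ : 0 < t₀) (hpos : 0 < h t₀) (hφ : φ t₀ ≤ 0) :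
    ¬ IntegrableOn (fun t => h t ^ 2 * t ^ (-(2 * a))) (Ioi 0) := by
  intro hL2
  set c := h t₀ * t₀ ^ ν / 2
  have hint := integrableOn_rpow_of_mul_rpow_le (p := -(2 * ν) + -(2 * a)) (c := c ^ 2)
    measurableSet_Ioo Ioo_subset_Ioi_self (by positivity) (hL2.mono_set Ioo_subset_Ioi_self)
    fun t ht => by
      have hle := hs.div_rpow_le_of_snd_nonpos ht₀ hpos hφ t (Ioo_subset_Ioc_self ht)
      rw [rpow_add ht.1, ← mul_assoc]
      refine mul_le_mul_of_nonneg_right ?_ (rpow_nonneg ht.1.le _)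
      calc c ^ 2 * t ^ (-(2 * ν)) = (c / t ^ ν) ^ 2 := by
            rw [div_pow c, ← rpow_mul_natCast ht.1.le, rpow_neg ht.1.le, div_eq_mul_inv]
            push_cast
            ring_nf
        _ ≤ h t ^ 2 := pow_le_pow_left₀ (div_nonneg (by positivity) (rpow_nonneg ht.1.le ν)) hle 2
  rw [intervalIntegral.integrableOn_Ioo_rpow_iff ht₀] at hint
  linarith

theorem nonpos_of_integrableOn (hs : IsBesselSystem ν h φ) {a : ℝ} (haν : 1 ≤ 2 * a + 2 * ν)
    (hL2 : IntegrableOn (fun t => h t ^ 2 * t ^ (-(2 * a))) (Ioi 0)) :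
    ∀ t ∈ Ioi 0, h t ≤ 0 := by
  intro t₀ ht₀
  by_contra! hpos
  rcases le_total 0 (φ t₀) with hφ | hφ
  · exact hs.not_integrableOn_of_mul_nonneg a ht₀ hpos.ne' (mul_nonneg hpos.le hφ) hL2
  · exact hs.not_integrableOn_of_snd_nonpos haν ht₀ hpos hφ hL2

end IsBesselSystem

theorem bessel_ode_no_weighted_L2_solution_general (f₀ a ν : ℝ) (haν : 2 * a + 2 * ν ≥ 1) (h : ℝ → ℝ)
    (hreg : ContDiffOn ℝ 2 h (Set.Ioi 0))
    (hode : ∀ t ∈ Set.Ioi (0 : ℝ),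
      t * deriv (fun s : ℝ => s * deriv h s) t = (t ^ 2 + ν ^ 2) * h t)
    (hL2 : MeasureTheory.IntegrableOn
      (fun t : ℝ => (t ^ (-(f₀ + 2 * a + 1) / 2) * h t) ^ 2 * t ^ (1 + f₀))
      (Set.Ioi 0) MeasureTheory.volume) :
    ∀ t ∈ Set.Ioi (0 : ℝ), h t = 0 := by
  have hL2' : IntegrableOn (fun t => h t ^ 2 * t ^ (-(2 * a))) (Ioi 0) := by
    refine hL2.congr_fun (fun t (ht : 0 < t) => ?_) measurableSet_Ioi
    beta_reduce
    rw [mul_pow, mul_comm _ (h t ^ 2), mul_assoc, ← rpow_mul_natCast ht.le, ← rpow_add ht]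
    ring_nf
  have hs := IsBesselSystem.of_ode hreg hode
  intro t ht
  have hle := hs.nonpos_of_integrableOn haν hL2' t ht
  have hge := hs.neg.nonpos_of_integrableOn haν (by simpa using hL2') t ht
  linarith

/-- Solutions `h` on `(0,∞)` of the modified Bessel-type ODE `((t∂ₜ)² - t² - ν²)h = 0`
with `ν > 0` which, after multiplication by `t^{-(f₀+2a+1)/2}`, lie in
`t^{-1/2}L²((0,∞), t^{f₀}dt)`, where `a > 0` and `2a + 2ν ≥ 1`, are identically zero. -/
theorem bessel_ode_no_weighted_L2_solution (f₀ a ν : ℝ) (hf₀ : 0 ≤ f₀) (ha : 0 < a)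
    (hν : 0 < ν) (haν : 2 * a + 2 * ν ≥ 1) (h : ℝ → ℝ)
    (hreg : ContDiffOn ℝ 2 h (Set.Ioi 0))
    (hode : ∀ t ∈ Set.Ioi (0 : ℝ),
      t * deriv (fun s : ℝ => s * deriv h s) t = (t ^ 2 + ν ^ 2) * h t)
    (hL2 : MeasureTheory.IntegrableOn
      (fun t : ℝ => (t ^ (-(f₀ + 2 * a + 1) / 2) * h t) ^ 2 * t ^ (1 + f₀))
      (Set.Ioi 0) MeasureTheory.volume) :
    ∀ t ∈ Set.Ioi (0 : ℝ), h t = 0 :=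
  bessel_ode_no_weighted_L2_solution_general f₀ a ν haν h hreg hode hL2
end

section
/- With notation as in the indicial family of the de Rham-type operator, the formal adjoint on L²(Z) of I_q(P_a; ζ) = [[ð^Z, -ζ-(f₀-N+a+1/2)],[ζ+N+a+1/2, -ð^Z]] (with ð^Z essentially self-adjoint and N self-adjoint) equals I_q(P_a; -(ζ + f₀ + 2a + 1)); consequently ζ is an indicial root if and only if -(ζ + f₀ + 2a + 1) is. -/
/-!
On the ℓ²-sum `E ⊕ F` the adjoint of a block operator `[[P, Q], [R, S]]` is the conjugate
transpose `[[P†, R†], [Q†, S†]]`. The indicial family has self-adjoint diagonal blocks `±ð^Z`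
and off-diagonal blocks `N - (ζ + f₀ + a + 1/2)` and `N + (ζ + a + 1/2)`, self-adjoint because
the shifts are real. Transposing exchanges them, which is the same as substituting
`ζ ↦ -(ζ + f₀ + 2a + 1)`. Adjoints of invertible operators are invertible.
-/

open ContinuousLinearMap

namespace WithLp

variable {𝕜 E F : Type*} [RCLike 𝕜] [NormedAddCommGroup E] [InnerProductSpace 𝕜 E]
  [CompleteSpace E] [NormedAddCommGroup F] [InnerProductSpace 𝕜 F] [CompleteSpace F]

theorem prod_adjoint_eq_of_blocks {A B : WithLp 2 (E × F) →L[𝕜] WithLp 2 (E × F)}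
    {P : E →L[𝕜] E} {Q : F →L[𝕜] E} {R : E →L[𝕜] F} {S : F →L[𝕜] F}
    (hA : ∀ u, (A u).fst = P u.fst + Q u.snd ∧ (A u).snd = R u.fst + S u.snd)
    (hB : ∀ u, (B u).fst = adjoint P u.fst + adjoint R u.snd ∧
      (B u).snd = adjoint Q u.fst + adjoint S u.snd) :
    adjoint A = B := by
  refine ((eq_adjoint_iff B A).mpr fun u v => ?_).symm
  rw [prod_inner_apply, prod_inner_apply]
  simp only [ofLp_fst, ofLp_snd]
  rw [(hA v).1, (hA v).2, (hB u).1, (hB u).2]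
  simp only [inner_add_left, inner_add_right, adjoint_inner_left]
  ring

end WithLp

theorem IsSelfAdjoint.add_ofReal_smul_one {A : Type*} [Ring A] [StarRing A] [Module ℂ A]
    [StarModule ℂ A] {a : A} (ha : IsSelfAdjoint a) (c : ℝ) :
    IsSelfAdjoint (a + (c : ℂ) • 1) :=
  ha.add (.smul (Complex.conj_ofReal c) (.one _))

theorem indicial_family_adjoint_symmetry_general {H : Type*} [NormedAddCommGroup H]
    [InnerProductSpace ℂ H] [CompleteSpace H]
    (T N : H →L[ℂ] H) (hT : IsSelfAdjoint T) (hN : IsSelfAdjoint N)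
    (f₀ a : ℝ)
    (A : ℝ → (WithLp 2 (H × H) →L[ℂ] WithLp 2 (H × H)))
    (hA : ∀ (ζ : ℝ) (u : WithLp 2 (H × H)),
      (A ζ u).fst = T u.fst + N u.snd - ((ζ : ℂ) + (f₀ + a + 1 / 2 : ℝ)) • u.snd ∧
      (A ζ u).snd = ((ζ : ℂ) + (a + 1 / 2 : ℝ)) • u.fst + N u.fst - T u.snd) :
    ∀ ζ : ℝ, ContinuousLinearMap.adjoint (A ζ) = A (-(ζ + f₀ + 2 * a + 1)) ∧
      (¬ IsUnit (A ζ) ↔ ¬ IsUnit (A (-(ζ + f₀ + 2 * a + 1)))) := by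
  intro ζ
  have hQ := hN.add_ofReal_smul_one (-(ζ + f₀ + a + 1 / 2))
  have hR := hN.add_ofReal_smul_one (ζ + a + 1 / 2)
  have hadj : adjoint (A ζ) = A (-(ζ + f₀ + 2 * a + 1)) := by
    refine WithLp.prod_adjoint_eq_of_blocks (P := T) (S := -T)
      (Q := N + ((-(ζ + f₀ + a + 1 / 2) : ℝ) : ℂ) • 1) (R := N + ((ζ + a + 1 / 2 : ℝ) : ℂ) • 1)
      (fun u => ?_) (fun u => ?_)
    all_goals
      simp only [hA, hT.adjoint_eq, hQ.adjoint_eq, hR.adjoint_eq, hT.neg.adjoint_eq, add_apply,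
        neg_apply, smul_apply, one_apply_eq_self]
      push_cast
      constructor <;> module
  exact ⟨hadj, by rw [← hadj, ← star_eq_adjoint, isUnit_star]⟩

/-- The formal adjoint on `L²(Z) ⊕ L²(Z)` of the indicial family
`I_q(P_a; ζ) = [[ð^Z, -ζ-(f₀-N+a+1/2)], [ζ+N+a+1/2, -ð^Z]]` (with `ð^Z` self-adjoint and
`N` self-adjoint) equals `I_q(P_a; -(ζ + f₀ + 2a + 1))`; consequently `ζ` is an indicial
root (i.e. the operator fails to be invertible) iff `-(ζ + f₀ + 2a + 1)` is. -/
theorem indicial_family_adjoint_symmetry {H : Type*} [NormedAddCommGroup H]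
    [InnerProductSpace ℂ H] [CompleteSpace H]
    (T N : H →L[ℂ] H) (hT : IsSelfAdjoint T) (hN : IsSelfAdjoint N)
    (f₀ a : ℝ) (hf₀ : 0 ≤ f₀)
    (A : ℝ → (WithLp 2 (H × H) →L[ℂ] WithLp 2 (H × H)))
    (hA : ∀ (ζ : ℝ) (u : WithLp 2 (H × H)),
      (A ζ u).fst = T u.fst + N u.snd - ((ζ : ℂ) + (f₀ + a + 1 / 2 : ℝ)) • u.snd ∧
      (A ζ u).snd = ((ζ : ℂ) + (a + 1 / 2 : ℝ)) • u.fst + N u.fst - T u.snd) :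
    ∀ ζ : ℝ, ContinuousLinearMap.adjoint (A ζ) = A (-(ζ + f₀ + 2 * a + 1)) ∧
      (¬ IsUnit (A ζ) ↔ ¬ IsUnit (A (-(ζ + f₀ + 2 * a + 1)))) :=
  indicial_family_adjoint_symmetry_general T N hT hN f₀ a A hA
end
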